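/- Let A, B : ℝ → ℝ be continuous functions on [0,1] such that every solution z of z' = A(t)z³ + B(t)z² with sufficiently small initial value z(0) satisfies z(1/2 + t) = z(1/2 - t) for all t ∈ [0, 1/2]. Then A(1/2 + t) = -A(1/2 - t) and B(1/2 + t) = -B(1/2 - t) for all t ∈ [0, 1/2]. -/

import Mathlib

/-!
For `0 < x` small, Picard–Lindelöf (after extending `A`, `B` continuously to `ℝ`) gives a solution
with `z 0 = x` that stays within `x/4` of `x` on `[0, 1]`. If such a solution is symmetric about
`1/2`, then `z'(1/2 + t) = -z'(1/2 - t)`, which reads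
`(A(1/2+t) + A(1/2-t)) z³ + (B(1/2+t) + B(1/2-t)) z² = 0` for `z = z(1/2 + t) ≠ 0`.
The solutions starting at `x` and `x/2` provide two distinct nonzero roots at every time, so both
coefficients vanish.
-/

open Set Metric
open scoped NNReal

theorem IsPicardLindelof.exists_eq_forall_mem_Icc_mem_closedBall_hasDerivWithinAt
    {E : Type*} [NormedAddCommGroup E] [NormedSpace ℝ E] [CompleteSpace E]
    {f : ℝ → E → E} {tmin tmax : ℝ} {t₀ : Icc tmin tmax} {x₀ x : E} {a r L K : ℝ≥0}
    (hf : IsPicardLindelof f t₀ x₀ a r L K) (hx : x ∈ closedBall x₀ r) :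
    ∃ α : ℝ → E, α t₀ = x ∧ ∀ t ∈ Icc tmin tmax,
      α t ∈ closedBall x₀ a ∧ HasDerivWithinAt α (f t (α t)) (Icc tmin tmax) t := by
  obtain ⟨α, hα⟩ := ODE.FunSpace.exists_isFixedPt_next hf hx
  refine ⟨α.compProj, by rw [ODE.FunSpace.compProj_val, ← hα, ODE.FunSpace.next_apply₀],
    fun t ht ↦ ⟨α.compProj_mem_closedBall hf.mul_max_le, ?_⟩⟩
  apply ODE.hasDerivWithinAt_picard_Icc t₀.2 hf.continuousOn_uncurry
    α.continuous_compProj.continuousOn (fun _ _ ↦ α.compProj_mem_closedBall hf.mul_max_le)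
    x ht |>.congr_of_mem _ ht
  intro t' ht'
  nth_rw 1 [← hα]
  rw [ODE.FunSpace.compProj_of_mem ht', ODE.FunSpace.next_apply]

theorem lipschitzOnWith_cubic_add_quadratic {a b : ℝ} {M : ℝ≥0} (ha : |a| ≤ M) (hb : |b| ≤ M) :
    LipschitzOnWith (5 * M) (fun y : ℝ ↦ a * y ^ 3 + b * y ^ 2) (closedBall 0 1) := by
  refine LipschitzOnWith.of_dist_le_mul fun x hx y hy ↦ ?_
  rw [mem_closedBall_zero_iff, Real.norm_eq_abs] at hx hy
  have hxy : |x ^ 2 + x * y + y ^ 2| ≤ 3 := by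
    rw [abs_le]; constructor <;> nlinarith [abs_le.mp hx, abs_le.mp hy]
  have hxy' : |x + y| ≤ 2 := by
    rw [abs_le]; constructor <;> linarith [abs_le.mp hx, abs_le.mp hy]
  calc dist (a * x ^ 3 + b * x ^ 2) (a * y ^ 3 + b * y ^ 2)
      = |a * (x ^ 2 + x * y + y ^ 2) + b * (x + y)| * dist x y := by
        rw [Real.dist_eq, Real.dist_eq, ← abs_mul]; ring_nf
    _ ≤ (|a| * |x ^ 2 + x * y + y ^ 2| + |b| * |x + y|) * dist x y := by
        gcongr; rw [← abs_mul, ← abs_mul]; exact abs_add_le _ _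
    _ ≤ (M * 3 + M * 2) * dist x y := by gcongr
    _ = ↑(5 * M) * dist x y := by push_cast; ring

theorem abs_cubic_add_quadratic_le {a b y M r : ℝ} (ha : |a| ≤ M) (hb : |b| ≤ M) (hy : |y| ≤ r) :
    |a * y ^ 3 + b * y ^ 2| ≤ M * (r ^ 3 + r ^ 2) := by
  have hr : 0 ≤ r := (abs_nonneg y).trans hy
  have hM : 0 ≤ M := (abs_nonneg a).trans ha
  calc |a * y ^ 3 + b * y ^ 2| ≤ |a| * |y| ^ 3 + |b| * |y| ^ 2 := by
        rw [← abs_pow, ← abs_pow, ← abs_mul, ← abs_mul]; exact abs_add_le _ _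
    _ ≤ M * r ^ 3 + M * r ^ 2 := by gcongr
    _ = M * (r ^ 3 + r ^ 2) := by ring

theorem HasDerivAt.eq_neg_of_symmetric_about {f : ℝ → ℝ} {c r t d d' : ℝ} (hr : 0 < r)
    (hsymm : ∀ s ∈ Icc 0 r, f (c + s) = f (c - s)) (ht : t ∈ Icc 0 r)
    (hd : HasDerivAt f d (c + t)) (hd' : HasDerivAt f d' (c - t)) : d = -d' := by
  have hrefl : HasDerivAt (fun u ↦ f (2 * c - u)) (-d') (c + t) := by
    rw [← show 2 * c - (c + t) = c - t by ring] at hd'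
    simpa [Function.comp_def] using hd'.comp (c + t) ((hasDerivAt_id' (c + t)).const_sub (2 * c))
  have hEq : EqOn f (fun u ↦ f (2 * c - u)) (Icc c (c + r)) := by
    intro u hu
    have := hsymm (u - c) ⟨by linarith [hu.1], by linarith [hu.2]⟩
    simp only [add_sub_cancel] at this
    rw [this]; ring_nf
  have hmem : c + t ∈ Icc c (c + r) := ⟨by linarith [ht.1], by linarith [ht.2]⟩
  exact ((uniqueDiffOn_Icc (by linarith)) _ hmem).eq_deriv _ hd.hasDerivWithinAt
    (hrefl.hasDerivWithinAt.congr hEq (hEq hmem))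

theorem eq_zero_of_cubic_add_quadratic_eq_zero {K : Type*} [Field K] {p q z₁ z₂ : K}
    (hz₁ : z₁ ≠ 0) (hz₂ : z₂ ≠ 0) (hz : z₁ ≠ z₂)
    (h₁ : p * z₁ ^ 3 + q * z₁ ^ 2 = 0) (h₂ : p * z₂ ^ 3 + q * z₂ ^ 2 = 0) : p = 0 ∧ q = 0 := by
  have l₁ : p * z₁ + q = 0 := by
    have : z₁ ^ 2 * (p * z₁ + q) = 0 := by linear_combination h₁
    simpa [hz₁] using this
  have l₂ : p * z₂ + q = 0 := by
    have : z₂ ^ 2 * (p * z₂ + q) = 0 := by linear_combination h₂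
    simpa [hz₂] using this
  have hp : p = 0 := by
    have : p * (z₁ - z₂) = 0 := by linear_combination l₁ - l₂
    simpa [sub_ne_zero.mpr hz] using this
  exact ⟨hp, by linear_combination l₁ - z₁ * hp⟩

def IsAbelSolution (A B z : ℝ → ℝ) : Prop :=
  ∀ t ∈ Icc (0 : ℝ) 1, HasDerivAt z (A t * z t ^ 3 + B t * z t ^ 2) t

theorem exists_abelSolution_near_of_continuous {a b : ℝ → ℝ} (ha : Continuous a)
    (hb : Continuous b) {M : ℝ≥0} (haM : ∀ t, |a t| ≤ M) (hbM : ∀ t, |b t| ≤ M) {x : ℝ}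
    (hx : 0 < x) (hxM : (96 * M + 2) * x ≤ 1) :
    ∃ z : ℝ → ℝ, z 0 = x ∧ IsAbelSolution a b z ∧ ∀ t ∈ Icc (0 : ℝ) 1, |z t - x| ≤ x / 4 := by
  lift x to ℝ≥0 using hx.le
  -- Solving on `[-1, 2]` makes the derivative two-sided at the endpoints of `[0, 1]`. On the ball
  -- of radius `x/4` about `x` the field is bounded by `M((2x)³ + (2x)²) ≤ x/8`.
  have hpl : IsPicardLindelof (fun t y ↦ a t * y ^ 3 + b t * y ^ 2)
      (⟨0, by norm_num⟩ : Icc (-1 : ℝ) 2) (x : ℝ) (x / 4) 0 (x / 8) (5 * M) := by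
    refine ⟨fun t _ ↦ ?_, fun y _ ↦ by fun_prop, fun t _ y hy ↦ ?_, ?_⟩
    · refine (lipschitzOnWith_cubic_add_quadratic (haM t) (hbM t)).mono
        (closedBall_subset_closedBall' ?_)
      push_cast
      rw [Real.dist_eq, sub_zero, abs_of_nonneg x.coe_nonneg]
      nlinarith [M.2]
    · rw [mem_closedBall, Real.dist_eq] at hy
      have hy' : |y| ≤ 2 * x := by
        have := abs_sub_abs_le_abs_sub y x
        rw [abs_of_nonneg x.coe_nonneg] at this
        push_cast at hy
        linarith
      calc ‖a t * y ^ 3 + b t * y ^ 2‖ ≤ M * ((2 * x) ^ 3 + (2 * x) ^ 2) :=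
            abs_cubic_add_quadratic_le (haM t) (hbM t) hy'
        _ ≤ ((x / 8 : ℝ≥0) : ℝ) := by
          push_cast
          nlinarith [M.2, x.2, mul_nonneg M.2 x.2]
    · push_cast
      rw [show max ((2 : ℝ) - 0) (0 - -1) = 2 by norm_num]
      linarith
  obtain ⟨z, hz0, hz⟩ :=
    hpl.exists_eq_forall_mem_Icc_mem_closedBall_hasDerivWithinAt (mem_closedBall_self le_rfl)
  refine ⟨z, hz0, fun t ht ↦ ?_, fun t ht ↦ ?_⟩
  · exact (hz t ⟨by linarith [ht.1], by linarith [ht.2]⟩).2.hasDerivAt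
      (Icc_mem_nhds (by linarith [ht.1]) (by linarith [ht.2]))
  · have := (hz t ⟨by linarith [ht.1], by linarith [ht.2]⟩).1
    rw [mem_closedBall, Real.dist_eq] at this
    exact_mod_cast this

theorem exists_abelSolution_near {A B : ℝ → ℝ} (hA : ContinuousOn A (Icc 0 1))
    (hB : ContinuousOn B (Icc 0 1)) :
    ∃ δ > 0, ∀ x ∈ Ioc 0 δ, ∃ z : ℝ → ℝ,
      z 0 = x ∧ IsAbelSolution A B z ∧ ∀ t ∈ Icc (0 : ℝ) 1, |z t - x| ≤ x / 4 := by
  set a := IccExtend zero_le_one ((Icc 0 1).domRestrict A)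
  set b := IccExtend zero_le_one ((Icc 0 1).domRestrict B)
  obtain ⟨CA, hCA⟩ := isCompact_Icc.exists_bound_of_continuousOn hA
  obtain ⟨CB, hCB⟩ := isCompact_Icc.exists_bound_of_continuousOn hB
  set M := (max CA CB).toNNReal
  have haM (t : ℝ) : |a t| ≤ M :=
    ((hCA _ (projIcc 0 1 _ t).2).trans (le_max_left _ _)).trans (Real.le_coe_toNNReal _)
  have hbM (t : ℝ) : |b t| ≤ M :=
    ((hCB _ (projIcc 0 1 _ t).2).trans (le_max_right _ _)).trans (Real.le_coe_toNNReal _)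
  refine ⟨1 / (96 * M + 2), by positivity, fun x hx ↦ ?_⟩
  obtain ⟨z, hz0, hz, hzx⟩ := exists_abelSolution_near_of_continuous
    (continuous_IccExtend_iff.mpr hA.domRestrict) (continuous_IccExtend_iff.mpr hB.domRestrict)
    haM hbM hx.1 (by rw [← le_div_iff₀' (by positivity)]; exact hx.2)
  refine ⟨z, hz0, fun t ht ↦ ?_, hzx⟩
  simpa [a, b, IccExtend_of_mem _ _ ht] using hz t ht

theorem IsAbelSolution.add_reflect_eq_zero {A B z : ℝ → ℝ} (hz : IsAbelSolution A B z)
    (hsymm : ∀ t ∈ Icc (0 : ℝ) (1 / 2), z (1 / 2 + t) = z (1 / 2 - t)) {t : ℝ}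
    (ht : t ∈ Icc (0 : ℝ) (1 / 2)) :
    (A (1 / 2 + t) + A (1 / 2 - t)) * z (1 / 2 + t) ^ 3
      + (B (1 / 2 + t) + B (1 / 2 - t)) * z (1 / 2 + t) ^ 2 = 0 := by
  have h := HasDerivAt.eq_neg_of_symmetric_about (by norm_num) hsymm ht
    (hz _ ⟨by linarith [ht.1], by linarith [ht.2]⟩) (hz _ ⟨by linarith [ht.2], by linarith [ht.1]⟩)
  rw [← hsymm t ht] at h
  linear_combination h

theorem stmt_1 (A B : ℝ → ℝ)
    (hA : ContinuousOn A (Icc 0 1)) (hB : ContinuousOn B (Icc 0 1))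
    (ε : ℝ) (hε : 0 < ε)
    (hsym : ∀ z : ℝ → ℝ,
      (∀ t ∈ Icc (0:ℝ) 1, HasDerivAt z (A t * z t ^ 3 + B t * z t ^ 2) t) →
      |z 0| < ε →
      ∀ t ∈ Icc (0:ℝ) (1/2), z (1/2 + t) = z (1/2 - t)) :
    (∀ t ∈ Icc (0:ℝ) (1/2), A (1/2 + t) = -A (1/2 - t)) ∧
    (∀ t ∈ Icc (0:ℝ) (1/2), B (1/2 + t) = -B (1/2 - t)) := by
  obtain ⟨δ, hδ, hsol⟩ := exists_abelSolution_near hA hB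
  set x := min δ (ε / 2)
  have hx : 0 < x := lt_min hδ (half_pos hε)
  have hxδ : x ≤ δ := min_le_left _ _
  have hxε : x < ε := (min_le_right _ _).trans_lt (half_lt_self hε)
  obtain ⟨z₁, hz₁0, hz₁, hz₁x⟩ := hsol x ⟨hx, hxδ⟩
  obtain ⟨z₂, hz₂0, hz₂, hz₂x⟩ := hsol (x / 2) ⟨half_pos hx, by linarith⟩
  have hsymm₁ := hsym z₁ hz₁ (by rwa [hz₁0, abs_of_pos hx])
  have hsymm₂ := hsym z₂ hz₂ (by rw [hz₂0, abs_of_pos (half_pos hx)]; linarith)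
  -- `z₁` takes values in `[3x/4, 5x/4]` and `z₂` in `[3x/8, 5x/8]`: nonzero and distinct.
  have key (t : ℝ) (ht : t ∈ Icc (0 : ℝ) (1 / 2)) :
      A (1 / 2 + t) + A (1 / 2 - t) = 0 ∧ B (1 / 2 + t) + B (1 / 2 - t) = 0 := by
    have hs : 1 / 2 + t ∈ Icc (0 : ℝ) 1 := ⟨by linarith [ht.1], by linarith [ht.2]⟩
    have h₁ := abs_le.mp (hz₁x _ hs)
    have h₂ := abs_le.mp (hz₂x _ hs)
    exact eq_zero_of_cubic_add_quadratic_eq_zero (by linarith) (by linarith) (by linarith)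
      (hz₁.add_reflect_eq_zero hsymm₁ ht) (hz₂.add_reflect_eq_zero hsymm₂ ht)
  exact ⟨fun t ht ↦ by linarith [(key t ht).1], fun t ht ↦ by linarith [(key t ht).2]⟩
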